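/- arXiv:math/0001101 — 3 statements merged into one kernel-verified Lean document; each statement's English description precedes it below -/
import Mathlib

section
/- If a torsion-free group G fulfills the strong Atiyah conjecture over KG, where K is a subring of ℂ, then the group ring KG has no non-trivial zero divisors (i.e. KG is a domain). -/
/-!
For torsion-free `G` every finite subgroup is trivial, so the strong Atiyah conjecture makes every
kernel dimension an integer. For the `1 × 1` matrix `(a)` the dimension is `‖P e‖² ∈ [0, 1]`, hence
`0` or `1`. If it is `1`, then `e ∈ ker a`, i.e. `a = a * 1 = 0`. If it is `0`, then `ker a ⊥ e`;
when `a * b = 0` every right translate `b * g⁻¹` lies in `ker a`, and pairing it with `e` reads off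
`b(g) = 0`.
-/

noncomputable section

open scoped ENNReal

instance : Fact ((1 : ℝ≥0∞) ≤ 2) := ⟨one_le_two⟩

/-- The Hilbert space `ℓ²(G)ⁿ`, modeled as square-summable families indexed by
`Fin n × G`. -/
abbrev L2 (G : Type*) (n : ℕ) : Type _ := lp (fun _ : Fin n × G => ℂ) 2

variable {G : Type*} [Group G]

/-- Convolution of a group ring element `a ∈ ℂG` with a function `x : G → ℂ`:
`(a ⋆ x)(g) = ∑_h a(h) · x(h⁻¹g)` (a finite sum over the support of `a`). -/
def conv (a : MonoidAlgebra ℂ G) (x : G → ℂ) (g : G) : ℂ :=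
  ∑ h ∈ a.coeff.support, a.coeff h * x (h⁻¹ * g)

/-- The kernel of the bounded operator `ℓ²(G)ⁿ → ℓ²(G)ᵐ` given by left convolution
with the matrix `A` over the group ring `ℂG`. -/
def matrixKernel {m n : ℕ} (A : Matrix (Fin m) (Fin n) (MonoidAlgebra ℂ G)) :
    Submodule ℂ (L2 G n) where
  carrier := {x | ∀ (i : Fin m) (g : G),
    ∑ j : Fin n, conv (A i j) (fun g' => x (j, g')) g = 0}
  zero_mem' := by
    intro i g
    simp [conv]
  add_mem' := by
    intro x y hx hy i g
    have hx' := hx i g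
    have hy' := hy i g
    simp only [conv, lp.coeFn_add, Pi.add_apply, mul_add, Finset.sum_add_distrib] at *
    rw [hx', hy', add_zero]
  smul_mem' := by
    intro c x hx i g
    have hx' := hx i g
    simp only [conv, lp.coeFn_smul, Pi.smul_apply, smul_eq_mul] at *
    have : (∑ j : Fin _, ∑ h ∈ (A i j).coeff.support, (A i j).coeff h * (c * x (j, h⁻¹ * g)))
        = c * ∑ j : Fin _, ∑ h ∈ (A i j).coeff.support, (A i j).coeff h * x (j, h⁻¹ * g) := by
      rw [Finset.mul_sum]
      exact Finset.sum_congr rfl fun j _ => by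
        rw [Finset.mul_sum]
        exact Finset.sum_congr rfl fun h _ => by ring
    rw [this, hx', mul_zero]

/-- The vector `eᵢ ∈ ℓ²(G)ⁿ` whose `i`-th coordinate is the characteristic function
of the identity element of `G` and whose other coordinates vanish. -/
def stdVec (G : Type*) [Group G] (n : ℕ) (i : Fin n) : L2 G n :=
  letI : DecidableEq (Fin n × G) := Classical.decEq _
  lp.single 2 (i, (1 : G)) 1

/-- The von Neumann dimension `dim_G(ker A) = ∑ᵢ ⟨P eᵢ, eᵢ⟩` where `P` is the
orthogonal projection of `ℓ²(G)ⁿ` onto the (closed) kernel of `A`. -/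
def dimKer {m n : ℕ} (A : Matrix (Fin m) (Fin n) (MonoidAlgebra ℂ G)) : ℝ :=
  letI S := (matrixKernel A).topologicalClosure
  haveI : CompleteSpace S := (Submodule.isClosed_topologicalClosure _).completeSpace_coe
  ∑ i : Fin n,
    (inner ℂ ((Submodule.orthogonalProjectionOnto S (stdVec G n i) : L2 G n)) (stdVec G n i) : ℂ).re

/-- `G` fulfills the Atiyah conjecture of order `Λ` over `KG` (for `K ⊆ ℂ`):
the von Neumann dimension of the kernel of any matrix over `KG` lies in `Λ`. -/
def AtiyahOfOrder (G : Type*) [Group G] (K : Subring ℂ) (Λ : AddSubgroup ℚ) : Prop :=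
  ∀ (m n : ℕ) (A : Matrix (Fin m) (Fin n) (MonoidAlgebra ℂ G)),
    (∀ i j g, (A i j).coeff g ∈ K) → ∃ q ∈ Λ, (q : ℝ) = dimKer A

/-- The additive subgroup of `ℚ` generated by the inverses of the orders of the
finite subgroups of `G`. -/
def strongLambda (G : Type*) [Group G] : AddSubgroup ℚ :=
  AddSubgroup.closure {q : ℚ | ∃ F : Subgroup G, (F : Set G).Finite ∧ q = 1 / (Nat.card F : ℚ)}

/-- The strong Atiyah conjecture for `G` over `KG`. -/
def StrongAtiyah (G : Type*) [Group G] (K : Subring ℂ) : Prop :=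
  AtiyahOfOrder G K (strongLambda G)

/-- The strong Atiyah conjecture over `KG` in the torsion-free case: all kernel
dimensions of matrices over `KG` are integers. -/
def StrongAtiyahInt (G : Type*) [Group G] (K : Subring ℂ) : Prop :=
  ∀ (m n : ℕ) (A : Matrix (Fin m) (Fin n) (MonoidAlgebra ℂ G)),
    (∀ i j g, (A i j).coeff g ∈ K) → ∃ k : ℤ, (k : ℝ) = dimKer A

/-- The rationals, as a subring of `ℂ`. -/
def ratSubring : Subring ℂ := (algebraMap ℚ ℂ).range

theorem Subgroup.eq_bot_of_finite_of_forall_not_isOfFinOrder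
    (htf : ∀ g : G, g ≠ 1 → ¬IsOfFinOrder g) {F : Subgroup G} (hF : (F : Set G).Finite) :
    F = ⊥ := by
  have : Finite F := hF.to_subtype
  refine F.eq_bot_iff_forall.mpr fun x hx => ?_
  by_contra hx1
  exact htf x hx1 (F.subtype.isOfFinOrder (isOfFinOrder_of_finite (⟨x, hx⟩ : F)))

theorem strongLambda_le_zmultiples_one (htf : ∀ g : G, g ≠ 1 → ¬IsOfFinOrder g) :
    strongLambda G ≤ AddSubgroup.zmultiples 1 := by
  rw [strongLambda, AddSubgroup.closure_le]
  rintro _ ⟨F, hF, rfl⟩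
  simp [Subgroup.eq_bot_of_finite_of_forall_not_isOfFinOrder htf hF]

theorem strongAtiyahInt_of_strongAtiyah {K : Subring ℂ}
    (htf : ∀ g : G, g ≠ 1 → ¬IsOfFinOrder g) (h : StrongAtiyah G K) : StrongAtiyahInt G K := by
  intro m n A hA
  obtain ⟨q, hq, hqA⟩ := h m n A hA
  obtain ⟨k, rfl⟩ := AddSubgroup.mem_zmultiples_iff.mp (strongLambda_le_zmultiples_one htf hq)
  exact ⟨k, by simpa using hqA⟩

namespace Submodule

variable {𝕜 E : Type*} [RCLike 𝕜] [NormedAddCommGroup E] [InnerProductSpace 𝕜 E]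

open RCLike in
theorem mem_or_mem_orthogonal_of_re_inner_starProjection_eq_intCast (K : Submodule 𝕜 E)
    [K.HasOrthogonalProjection] {v : E} (hv : ‖v‖ = 1) {k : ℤ}
    (hk : re (inner 𝕜 (K.starProjection v) v) = k) : v ∈ K ∨ v ∈ Kᗮ := by
  rw [re_inner_starProjection_eq_normSq] at hk
  have hle : ‖K.orthogonalProjectionOnto v‖ ≤ 1 := hv ▸ K.norm_orthogonalProjectionOnto_apply_le v
  have hk01 : k = 0 ∨ k = 1 := by
    have h0 : (0 : ℝ) ≤ k := hk ▸ sq_nonneg _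
    have h1 : (k : ℝ) ≤ 1 := hk ▸ pow_le_one₀ (norm_nonneg _) hle
    have : (0 : ℤ) ≤ k ∧ k ≤ 1 := ⟨by exact_mod_cast h0, by exact_mod_cast h1⟩
    omega
  rcases hk01 with rfl | rfl
  · right
    rw [← starProjection_apply_eq_zero_iff, starProjection_apply, ZeroMemClass.coe_eq_zero,
      ← norm_eq_zero]
    simpa using hk
  · left
    rw [mem_iff_norm_starProjection, hv]
    exact (pow_eq_one_iff_of_nonneg (norm_nonneg _) two_ne_zero).mp (by exact_mod_cast hk)

end Submodule

def toL2 {G : Type*} (c : MonoidAlgebra ℂ G) : L2 G 1 :=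
  ⟨fun p => c.coeff p.2, (memℓp_zero_iff.mpr <|
    (Set.finite_univ.prod c.coeff.hasFiniteSupport).subset fun _ hp => ⟨Set.mem_univ _, hp⟩)
      |>.of_exponent_ge zero_le⟩

@[simp]
theorem toL2_apply {G : Type*} (c : MonoidAlgebra ℂ G) (p : Fin 1 × G) :
    toL2 c p = c.coeff p.2 := rfl

theorem conv_coeff (a c : MonoidAlgebra ℂ G) (g : G) : conv a c.coeff g = (a * c).coeff g := by
  rw [conv, MonoidAlgebra.coeff_mul_apply_left, Finsupp.sum]

theorem matrixKernel_isClosed {m n : ℕ} (A : Matrix (Fin m) (Fin n) (MonoidAlgebra ℂ G)) :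
    IsClosed (matrixKernel A : Set (L2 G n)) := by
  have hcont (j : Fin n) (g : G) : Continuous fun x : L2 G n => x (j, g) :=
    (lp.evalCLM ℂ (fun _ => ℂ) 2 (j, g)).continuous
  simp only [matrixKernel, Submodule.coe_set_mk, AddSubmonoid.coe_set_mk,
    AddSubsemigroup.coe_set_mk, Set.ofPred_forall]
  exact isClosed_iInter fun i => isClosed_iInter fun g => isClosed_eq
    (continuous_finsetSum _ fun j _ => continuous_finsetSum _ fun h _ =>
      continuous_const.mul (hcont j _)) continuous_const

theorem toL2_mem_matrixKernel_replicateCol_iff {m : ℕ} (a : Fin m → MonoidAlgebra ℂ G)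
    (c : MonoidAlgebra ℂ G) :
    toL2 c ∈ matrixKernel (Matrix.replicateCol (Fin 1) a) ↔ ∀ i, a i * c = 0 := by
  simp only [matrixKernel, Submodule.mem_mk, AddSubmonoid.mem_mk, AddSubsemigroup.mem_mk,
    Set.mem_ofPred_eq, Fin.sum_univ_one, Matrix.replicateCol_apply, toL2_apply, conv_coeff,
    MonoidAlgebra.ext_iff, Finsupp.ext_iff, MonoidAlgebra.coeff_zero, Finsupp.coe_zero,
    Pi.zero_apply]

theorem stdVec_eq_toL2_one : stdVec G 1 0 = toL2 1 := by
  classical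
  ext ⟨j, g⟩
  simp [stdVec, lp.single_apply, Pi.single_apply, MonoidAlgebra.one_def,
    MonoidAlgebra.coeff_single, Finsupp.single_apply, Fin.fin_one_eq_zero j, eq_comm]

theorem inner_stdVec_right {n : ℕ} (x : L2 G n) (i : Fin n) :
    inner ℂ x (stdVec G n i) = starRingEnd ℂ (x (i, 1)) := by
  let _ : DecidableEq (Fin n × G) := Classical.decEq _
  rw [stdVec, lp.inner_single_right]
  simp

theorem norm_stdVec (n : ℕ) (i : Fin n) : ‖stdVec G n i‖ = 1 := by
  let _ : DecidableEq (Fin n × G) := Classical.decEq _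
  rw [stdVec, lp.norm_single two_pos, norm_one]

theorem stdVec_mem_or_mem_orthogonal_of_dimKer_eq_intCast {m : ℕ}
    {A : Matrix (Fin m) (Fin 1) (MonoidAlgebra ℂ G)} {k : ℤ} (hk : dimKer A = k) :
    stdVec G 1 0 ∈ matrixKernel A ∨ stdVec G 1 0 ∈ (matrixKernel A)ᗮ := by
  rw [dimKer, Fin.sum_univ_one] at hk
  rw [← (matrixKernel_isClosed A).submodule_topologicalClosure_eq]
  exact Submodule.mem_or_mem_orthogonal_of_re_inner_starProjection_eq_intCast _
    (norm_stdVec 1 0) hk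

theorem eq_zero_of_stdVec_mem_matrixKernel {m : ℕ} {a : Fin m → MonoidAlgebra ℂ G}
    (he : stdVec G 1 0 ∈ matrixKernel (Matrix.replicateCol (Fin 1) a)) (i : Fin m) : a i = 0 := by
  rw [stdVec_eq_toL2_one, toL2_mem_matrixKernel_replicateCol_iff] at he
  simpa using he i

theorem eq_zero_of_stdVec_mem_orthogonal {m : ℕ} {a : Fin m → MonoidAlgebra ℂ G}
    (he : stdVec G 1 0 ∈ (matrixKernel (Matrix.replicateCol (Fin 1) a))ᗮ)
    {c : MonoidAlgebra ℂ G} (hc : ∀ i, a i * c = 0) : c = 0 := by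
  ext g
  have hmem :
      toL2 (c * MonoidAlgebra.single g⁻¹ 1) ∈ matrixKernel (Matrix.replicateCol (Fin 1) a) :=
    (toL2_mem_matrixKernel_replicateCol_iff _ _).mpr fun i => by rw [← mul_assoc, hc i, zero_mul]
  have h0 := (Submodule.mem_orthogonal _ _).mp he _ hmem
  simpa [inner_stdVec_right, MonoidAlgebra.coeff_mul_single_apply] using h0

/-- **Lemma (zero divisor conjecture from the strong Atiyah conjecture).**
If a torsion-free group `G` fulfills the strong Atiyah conjecture over `KG`, where
`K` is a subring of `ℂ`, then the group ring `KG` has no non-trivial zero divisors. -/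
theorem strongAtiyah_no_zero_divisors (G : Type*) [Group G] (K : Subring ℂ)
    (htf : ∀ g : G, g ≠ 1 → ¬IsOfFinOrder g) (h : StrongAtiyah G K)
    (a b : MonoidAlgebra K G) (hab : a * b = 0) :
    a = 0 ∨ b = 0 := by
  let ι := MonoidAlgebra.mapRingHom G K.subtype
  have hι : Function.Injective ι := MonoidAlgebra.map_injective _ Subtype.coe_injective
  obtain ⟨k, hk⟩ := strongAtiyahInt_of_strongAtiyah htf h 1 1 (Matrix.replicateCol (Fin 1) ![ι a])
    fun _ _ g => by simp [ι]
  rcases stdVec_mem_or_mem_orthogonal_of_dimKer_eq_intCast hk.symm with he | he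
  · exact .inl <| hι <| by simpa using eq_zero_of_stdVec_mem_matrixKernel he 0
  · exact .inr <| hι <| by
      simpa using eq_zero_of_stdVec_mem_orthogonal he (c := ι b) fun _ => by
        simp [← map_mul, hab]
end
end

section
/- Let p : H → A be a group homomorphism, let G be a group, and let q = p * 1 : H * G → A be the homomorphism on the free product that restricts to p on H and is trivial on G. Let E be a subgroup of A and let T be a transversal for p⁻¹(E) in H (a set of representatives of the left cosets H/p⁻¹(E)). Then q⁻¹(E) is the subgroup of H * G generated by p⁻¹(E) together with the conjugates t⁻¹Gt for t ∈ T, and q⁻¹(E) is isomorphic to the free product p⁻¹(E) * (*_{t∈T} t⁻¹Gt). -/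
/-
Write `K = p⁻¹(E)` and let `φ : K ∗ (∗_{t ∈ T} G) → H ∗ G` be the inclusion on `K` and
`g ↦ t⁻¹ g t` on the `t`-th factor. Every element of `H ∗ G` has the form `t · φ(w)` with
`t ∈ T`: letters from `H` are absorbed through `h t = t' k` (`t' ∈ T`, `k ∈ K`), and a letter
`g ∈ G` in front of `t` is `t · φ(g_t)`. Since `q ∘ φ` lands in `E`, such an element lies in
`q⁻¹(E)` iff `t ∈ K`, so `q⁻¹(E) = range φ`, which is generated by `K` and the `t⁻¹ G t`.

Injectivity of `φ` is van der Waerden's trick: `H ∗ G` acts on `T × (K ∗ (∗_{t ∈ T} G))`, with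
`h` sending `(t, w)` to `(t', k w)` where `h t = t' k`, and `g` sending `(t, w)` to `(t, g_t w)`.
If `t₀ k₀ = 1`, then `φ(d)` moves `(t₀, k₀)` to `(t₀, k₀ d)`, so `d` can be read off `φ(d)`.
-/

namespace Subgroup

variable {H : Type*} [Group H]

theorem isComplement_of_existsUnique_inv_mul_mem {K : Subgroup H} {T : Set H}
    (hT : ∀ h : H, ∃! t, t ∈ T ∧ h⁻¹ * t ∈ K) : IsComplement T K :=
  isComplement_iff_existsUnique_inv_mul_mem.2 fun h => by
    obtain ⟨t, ⟨ht, hk⟩, huniq⟩ := hT h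
    exact ⟨⟨t, ht⟩, by simpa using inv_mem hk,
      fun s hs => Subtype.ext (huniq s ⟨s.2, by simpa using inv_mem hs⟩)⟩

theorem IsComplement.equiv_eq_of_eq_mul {S U : Set H} (hSU : IsComplement S U)
    {h : H} {s : S} {u : U} (e : h = s * u) : hSU.equiv h = (s, u) := by
  subst e
  exact hSU.equiv.apply_symm_apply (s, u)

end Subgroup

namespace Monoid.Coprod

open Subgroup

variable {H : Type*} [Group H] {K : Subgroup H} {T : Set H} {G : Type*} [Group G]

variable (K T G) in
def transversalHom : K ∗ CoprodI (fun _ : T => G) →* H ∗ G :=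
  lift (inl.comp K.subtype)
    (CoprodI.lift fun t => (MulAut.conj (inl (t : H))⁻¹).toMonoidHom.comp inr)

@[simp]
theorem transversalHom_inl (k : K) : transversalHom K T G (inl k) = inl (k : H) := by
  simp [transversalHom]

@[simp]
theorem transversalHom_inr_of (t : T) (g : G) :
    transversalHom K T G (inr (CoprodI.of (i := t) g)) =
      (inl (t : H))⁻¹ * inr g * inl (t : H) := by
  simp [transversalHom]

theorem range_transversalHom :
    (transversalHom K T G).range = closure (inl '' (K : Set H) ∪
      ⋃ t ∈ T, Set.range fun g : G => (inl t)⁻¹ * inr g * inl t) := by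
  apply le_antisymm
  · rw [transversalHom, range_lift, sup_le_iff]
    constructor
    · rintro _ ⟨k, rfl⟩
      exact subset_closure (Or.inl ⟨k, k.2, rfl⟩)
    · refine CoprodI.lift_range_le _ _ fun t => ?_
      rintro _ ⟨g, rfl⟩
      refine subset_closure (Or.inr (Set.mem_iUnion₂.2 ⟨t, t.2, g, ?_⟩))
      simp
  · rw [closure_le]
    rintro _ (⟨k, hk, rfl⟩ | hx)
    · exact ⟨_, transversalHom_inl ⟨k, hk⟩⟩
    · obtain ⟨t, ht, g, rfl⟩ := Set.mem_iUnion₂.1 hx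
      exact ⟨_, transversalHom_inr_of ⟨t, ht⟩ g⟩

theorem exists_inl_mul_transversalHom_eq (hTK : IsComplement T K) (x : H ∗ G) :
    ∃ t ∈ T, ∃ d, inl t * transversalHom K T G d = x := by
  induction x using induction_on' with
  | one =>
    refine ⟨_, (hTK.equiv 1).1.2, inl (hTK.equiv 1).2, ?_⟩
    rw [transversalHom_inl, ← map_mul, hTK.equiv_fst_mul_equiv_snd, map_one]
  | inl_mul h x ih =>
    obtain ⟨t, -, d, rfl⟩ := ih
    refine ⟨_, (hTK.equiv (h * t)).1.2, inl (hTK.equiv (h * t)).2 * d, ?_⟩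
    rw [map_mul (transversalHom K T G), transversalHom_inl, ← mul_assoc, ← map_mul,
      hTK.equiv_fst_mul_equiv_snd, map_mul, mul_assoc]
  | inr_mul g x ih =>
    obtain ⟨t, ht, d, rfl⟩ := ih
    refine ⟨t, ht, inr (CoprodI.of (i := ⟨t, ht⟩) g) * d, ?_⟩
    rw [map_mul, transversalHom_inr_of]
    group

variable (G) in
noncomputable def transversalActionInl (hTK : IsComplement T K) :
    H →* Function.End (T × (K ∗ CoprodI fun _ : T => G)) where
  toFun h s := ((hTK.equiv (h * s.1)).1, inl (hTK.equiv (h * s.1)).2 * s.2)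
  map_one' := funext fun s => by
    rw [hTK.equiv_eq_of_eq_mul (s := s.1) (u := 1) (by simp)]
    simp [Function.End.one_def]
  map_mul' h₁ h₂ := funext fun s => by
    have ha := hTK.equiv_fst_mul_equiv_snd (h₂ * s.1)
    have hb := hTK.equiv_fst_mul_equiv_snd (h₁ * (hTK.equiv (h₂ * s.1)).1)
    set a := hTK.equiv (h₂ * s.1)
    set b := hTK.equiv (h₁ * a.1)
    have e : h₁ * h₂ * s.1 = b.1 * (b.2 * a.2 : K) := by
      rw [coe_mul, ← mul_assoc, hb, mul_assoc, mul_assoc h₁ (a.1 : H), ha]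
    change (_, _) = (_, inl b.2 * (inl a.2 * s.2))
    rw [hTK.equiv_eq_of_eq_mul e, map_mul, mul_assoc]

variable (K T G) in
def transversalActionInr : G →* Function.End (T × (K ∗ CoprodI fun _ : T => G)) where
  toFun g s := (s.1, inr (CoprodI.of (i := s.1) g) * s.2)
  map_one' := funext fun s => by simp [Function.End.one_def]
  map_mul' g₁ g₂ := funext fun s => by
    change (_, _) = (_, _ * (_ * s.2))
    rw [map_mul, map_mul, mul_assoc]

variable (G) in
noncomputable def transversalAction (hTK : IsComplement T K) :
    H ∗ G →* Function.End (T × (K ∗ CoprodI fun _ : T => G)) :=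
  lift (transversalActionInl G hTK) (transversalActionInr K T G)

theorem transversalAction_inl_of_eq_mul (hTK : IsComplement T K) {h : H} {t t' : T} {k : K}
    (e : h * t = t' * k) (w : K ∗ CoprodI fun _ : T => G) :
    transversalAction G hTK (inl h) (t, w) = (t', inl k * w) := by
  rw [transversalAction, lift_apply_inl]
  change (_, _) = _
  rw [hTK.equiv_eq_of_eq_mul e]

theorem transversalAction_inr (hTK : IsComplement T K) (g : G) (t : T)
    (w : K ∗ CoprodI fun _ : T => G) :
    transversalAction G hTK (inr g) (t, w) = (t, inr (CoprodI.of (i := t) g) * w) := by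
  rw [transversalAction, lift_apply_inr]
  rfl

theorem transversalAction_mul_apply (hTK : IsComplement T K) (x y : H ∗ G)
    (s : T × (K ∗ CoprodI fun _ : T => G)) :
    transversalAction G hTK (x * y) s =
      transversalAction G hTK x (transversalAction G hTK y s) := by
  rw [map_mul]
  rfl

theorem transversalAction_transversalHom (hTK : IsComplement T K)
    (d w : K ∗ CoprodI fun _ : T => G) :
    transversalAction G hTK (transversalHom K T G d)
        ((hTK.equiv 1).1, inl (hTK.equiv 1).2 * w) =
      ((hTK.equiv 1).1, inl (hTK.equiv 1).2 * (d * w)) := by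
  set t₀ := (hTK.equiv 1).1
  set k₀ : K := (hTK.equiv 1).2
  have ht₀ : (t₀ : H) = (k₀ : H)⁻¹ :=
    eq_inv_of_mul_eq_one_left (hTK.equiv_fst_mul_equiv_snd 1)
  induction d using Coprod.induction_on generalizing w with
  | inl k =>
    rw [transversalHom_inl, transversalAction_inl_of_eq_mul hTK (t' := t₀)
      (k := k₀ * k * k₀⁻¹) (by simp [ht₀, mul_assoc])]
    simp [mul_assoc]
  | inr n =>
    induction n using CoprodI.induction_on generalizing w with
    | one => simp [Function.End.one_def]
    | of t g =>
      rw [transversalHom_inr_of, transversalAction_mul_apply, transversalAction_mul_apply,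
        transversalAction_inl_of_eq_mul hTK (t' := t) (k := k₀⁻¹) (by simp [ht₀]),
        transversalAction_inr, ← map_inv,
        transversalAction_inl_of_eq_mul hTK (t' := t₀) (k := k₀) (by simp [ht₀])]
      simp
    | mul x y hx hy =>
      rw [map_mul, map_mul, transversalAction_mul_apply, hy, hx, mul_assoc]
  | mul x y hx hy =>
    rw [map_mul, transversalAction_mul_apply, hy, hx, mul_assoc]

theorem transversalHom_injective (hTK : IsComplement T K) :
    Function.Injective (transversalHom K T G) :=
  Function.LeftInverse.injective (g := fun x => (inl (hTK.equiv 1).2)⁻¹ *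
      (transversalAction G hTK x ((hTK.equiv 1).1, inl (hTK.equiv 1).2 * 1)).2)
    fun d => by
      beta_reduce
      rw [transversalAction_transversalHom, inv_mul_cancel_left, mul_one]

theorem closure_le_comap_lift_one {A : Type*} [Group A] {p : H →* A} {E : Subgroup A}
    (hK : K ≤ E.comap p) :
    closure (inl '' (K : Set H) ∪ ⋃ t ∈ T, Set.range fun g : G => (inl t)⁻¹ * inr g * inl t) ≤
      E.comap (lift p (1 : G →* A)) := by
  rw [closure_le]
  rintro _ (⟨k, hk, rfl⟩ | hx)
  · simpa using hK hk
  · obtain ⟨t, -, g, rfl⟩ := Set.mem_iUnion₂.1 hx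
    simp

theorem comap_lift_one_le_range_transversalHom {A : Type*} [Group A] {p : H →* A}
    {E : Subgroup A} (hTK : IsComplement T (E.comap p : Set H)) :
    E.comap (lift p (1 : G →* A)) ≤ (transversalHom (E.comap p) T G).range := by
  intro x hx
  obtain ⟨t, -, d, rfl⟩ := exists_inl_mul_transversalHom_eq hTK x
  have hd : lift p 1 (transversalHom (E.comap p) T G d) ∈ E :=
    range_transversalHom.trans_le (closure_le_comap_lift_one le_rfl) ⟨d, rfl⟩
  have ht : t ∈ E.comap p := by
    rw [mem_comap, map_mul, lift_apply_inl] at hx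
    exact (mul_mem_cancel_right hd).1 hx
  exact ⟨inl ⟨t, ht⟩ * d, by rw [map_mul, transversalHom_inl]⟩

end Monoid.Coprod

open Monoid.Coprod in
/-- **Lemma (preimages of subgroups under free products).** Let `p : H → A` be a
homomorphism, `G` a group and `q = p * 1 : H * G → A`. For a subgroup `E ≤ A` and a
transversal `T` of `p⁻¹(E)` in `H`, the preimage `q⁻¹(E)` is generated by `p⁻¹(E)`
together with the conjugates `t⁻¹Gt` for `t ∈ T`, and it is isomorphic to the free
product `p⁻¹(E) * (*_{t∈T} t⁻¹Gt) ≅ p⁻¹(E) * (*_{t∈T} G)`. -/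
theorem comap_coprod_lift_free_product (H G A : Type u) [Group H] [Group G] [Group A]
    (p : H →* A) (E : Subgroup A) (T : Set H)
    (hT : ∀ h : H, ∃! t, t ∈ T ∧ h⁻¹ * t ∈ E.comap p) :
    (E.comap (Monoid.Coprod.lift p (1 : G →* A)) =
      Subgroup.closure
        ((Monoid.Coprod.inl '' (E.comap p : Set H)) ∪
          ⋃ t ∈ T, Set.range (fun g : G =>
            (Monoid.Coprod.inl t)⁻¹ * Monoid.Coprod.inr g * Monoid.Coprod.inl t))) ∧
    Nonempty ((E.comap (Monoid.Coprod.lift p (1 : G →* A))) ≃*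
      Monoid.Coprod (E.comap p) (Monoid.CoprodI (fun _ : T => G))) := by
  have hTK := Subgroup.isComplement_of_existsUnique_inv_mul_mem hT
  have hrange := range_transversalHom (K := E.comap p) (T := T) (G := G)
  have hcomap : E.comap (lift p (1 : G →* A)) = (transversalHom (E.comap p) T G).range :=
    le_antisymm (comap_lift_one_le_range_transversalHom hTK)
      (hrange ▸ closure_le_comap_lift_one le_rfl)
  exact ⟨hcomap.trans hrange, ⟨(MulEquiv.subgroupCongr hcomap).trans
    (MonoidHom.ofInjective (transversalHom_injective hTK)).symm⟩⟩
end

section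
/- Let H be a group acting freely on sets Δ and Ω', let X be a set with exactly r ≥ 1 elements equipped with the trivial H-action, and set Ω = Ω' ⊔ X with the componentwise H-action. Suppose f : Δ → Ω is an H-equivariant map and there exists a bijection θ : Δ → Ω such that the set {x ∈ Δ : f(x) ≠ θ(x)} is finite. Then H is finite and the order of H divides r. -/
/-! Off the finite set where `f` and `θ` disagree, `f` is injective with image missing only
finitely many points, so the set `N` of points of `Ω` whose fibre is not a singleton is finite;
by equivariance it is `H`-invariant. For every finite `Y ⊇ N`, comparing `f` with `θ` gives
`|f⁻¹ Y| = |Y|`. For `Y = N ∪ X`, both `f⁻¹ Y ⊆ Δ` and `Y ∩ Ω'` are finite invariant subsets of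
free `H`-sets, so `|H|` divides `|f⁻¹ Y| = |Y ∩ Ω'| + r` and `|Y ∩ Ω'|`, hence `r`.
With the convention `Nat.card H = 0` for infinite `H` this divisibility holds verbatim (a free
action of an infinite group has no nonempty finite invariant set), so `r ≥ 1` forces `H` finite. -/

universe u

open Set MulAction

theorem Set.ncard_eq_ncard_preimage_inl_add_ncard_preimage_inr {α β : Type*} {s : Set (α ⊕ β)}
    (hs : s.Finite) : s.ncard = (Sum.inl ⁻¹' s).ncard + (Sum.inr ⁻¹' s).ncard := by
  conv_lhs => rw [← image_preimage_inl_union_image_preimage_inr s]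
  rw [ncard_union_eq disjoint_image_inl_image_inr
      ((hs.preimage Sum.inl_injective.injOn).image _)
      ((hs.preimage Sum.inr_injective.injOn).image _),
    ncard_image_of_injective _ Sum.inl_injective, ncard_image_of_injective _ Sum.inr_injective]

section AlmostEquiv

variable {α β : Type*} {f : α → β} {θ : α ≃ β}

theorem setOf_not_existsUnique_subset (f : α → β) (θ : α ≃ β) :
    {z | ¬∃! x, f x = z} ⊆ f '' {x | f x ≠ θ x} ∪ θ '' {x | f x ≠ θ x} := by
  intro z hz
  by_contra hzS
  have hfθ : ∀ x, f x = z → f x = θ x := fun x hx =>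
    by_contra fun hne => hzS (Or.inl ⟨x, hne, hx⟩)
  have hθ : f (θ.symm z) = z := by_contra fun hne =>
    hzS (Or.inr ⟨θ.symm z, fun h => hne (h.trans (θ.apply_symm_apply z)), θ.apply_symm_apply z⟩)
  exact hz ⟨θ.symm z, hθ, fun y hy => θ.injective (by rw [← hfθ y hy, hy, θ.apply_symm_apply])⟩

theorem finite_preimage_of_finite_ne (hS : {x | f x ≠ θ x}.Finite) {Y : Set β} (hY : Y.Finite) :
    (f ⁻¹' Y).Finite := by
  refine (hS.union (hY.preimage θ.injective.injOn)).subset fun x hx => ?_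
  by_cases h : f x = θ x
  · exact Or.inr (by rwa [mem_preimage, ← h])
  · exact Or.inl h

theorem preimage_eq_preimage_of_image_ne_subset {Z : Set β} (hf : f '' {x | f x ≠ θ x} ⊆ Z)
    (hθ : θ '' {x | f x ≠ θ x} ⊆ Z) : f ⁻¹' Z = θ ⁻¹' Z := by
  ext x
  by_cases hx : f x = θ x
  · rw [mem_preimage, mem_preimage, hx]
  · exact ⟨fun _ => hθ ⟨x, hx, rfl⟩, fun _ => hf ⟨x, hx, rfl⟩⟩

theorem ncard_preimage_of_existsUnique {W : Set β} (hW : ∀ z ∈ W, ∃! x, f x = z) :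
    (f ⁻¹' W).ncard = W.ncard :=
  BijOn.ncard_eq ⟨fun _ hx => hx, fun x hx _ _ hxy => (hW _ hx).unique rfl hxy.symm,
    fun z hz => (hW z hz).exists.imp fun x hx => ⟨by rwa [mem_preimage, hx], hx⟩⟩

theorem ncard_preimage_eq_of_finite_ne (hS : {x | f x ≠ θ x}.Finite) {Y : Set β} (hY : Y.Finite)
    (hN : {z | ¬∃! x, f x = z} ⊆ Y) : (f ⁻¹' Y).ncard = Y.ncard := by
  set S := {x | f x ≠ θ x}
  set Z := Y ∪ (f '' S ∪ θ '' S)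
  have hYZ : Y ⊆ Z := subset_union_left
  have hZ : Z.Finite := hY.union ((hS.image f).union (hS.image θ))
  have hcardZ : (f ⁻¹' Z).ncard = Z.ncard := by
    rw [preimage_eq_preimage_of_image_ne_subset (subset_union_left.trans subset_union_right)
      (subset_union_right.trans subset_union_right)]
    exact ncard_preimage_of_injective_subset_range θ.injective (by simp)
  have hcardZY : (f ⁻¹' (Z \ Y)).ncard = (Z \ Y).ncard :=
    ncard_preimage_of_existsUnique fun z hz => by_contra fun h => hz.2 (hN h)
  have hsplitZ := ncard_sdiff_add_ncard_of_subset hYZ hZ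
  have hsplitPreZ := ncard_sdiff_add_ncard_of_subset (preimage_mono (f := f) hYZ)
    (finite_preimage_of_finite_ne hS hZ)
  rw [← preimage_sdiff] at hsplitPreZ
  omega

end AlmostEquiv

section FreeAction

variable {G α β : Type*} [Group G] [MulAction G α] [MulAction G β]

theorem card_dvd_card_of_isCancelSMul [IsCancelSMul G α] [Finite α] :
    Nat.card G ∣ Nat.card α := by
  cases isEmpty_or_nonempty α with
  | inl _ => simp
  | inr hα =>
    obtain ⟨x⟩ := hα
    have : Finite G := Finite.of_injective (· • x) fun g h => IsCancelSMul.right_cancel g h x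
    have := Fintype.ofFinite (orbitRel.Quotient G α)
    rw [Nat.card_congr (selfEquivSigmaOrbits G α), Nat.card_sigma]
    refine Finset.dvd_sum fun ω _ => ?_
    rw [Nat.card_coe_set_eq, ← index_stabilizer, IsCancelSMul.stabilizer_eq_bot, Subgroup.index_bot]

theorem card_dvd_ncard_of_isCancelSMul [IsCancelSMul G α] {s : Set α} (hs : s.Finite)
    (hinv : ∀ g : G, ∀ x ∈ s, g • x ∈ s) : Nat.card G ∣ s.ncard := by
  let p : SubMulAction G α := ⟨s, fun g _ hx => hinv g _ hx⟩
  have : Finite p := hs.to_subtype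
  have : IsCancelSMul G p := isCancelSMul_iff_eq_one_of_smul_eq.mpr fun g x hx =>
    IsCancelSMul.eq_one_of_smul (congrArg Subtype.val hx)
  exact card_dvd_card_of_isCancelSMul (α := p)

theorem existsUnique_eq_smul_iff {f : α → β} (hf : ∀ (g : G) (x : α), f (g • x) = g • f x)
    (g : G) (z : β) : (∃! x, f x = g • z) ↔ ∃! x, f x = z :=
  ((toPerm g).existsUnique_congr fun {x} => by simp [hf]).symm

theorem card_dvd_ncard_of_equivariant_of_finite_ne [IsCancelSMul G α] {f : α → β}
    (hf : ∀ (g : G) (x : α), f (g • x) = g • f x) {θ : α ≃ β} (hS : {x | f x ≠ θ x}.Finite)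
    {Y : Set β} (hY : Y.Finite) (hN : {z | ¬∃! x, f x = z} ⊆ Y)
    (hinv : ∀ g : G, ∀ z ∈ Y, g • z ∈ Y) : Nat.card G ∣ Y.ncard := by
  rw [← ncard_preimage_eq_of_finite_ne hS hY hN]
  refine card_dvd_ncard_of_isCancelSMul (finite_preimage_of_finite_ne hS hY) fun g x hx => ?_
  rw [mem_preimage, hf]
  exact hinv g _ hx

end FreeAction

/-- **Lemma.** Let `H` act freely on `Δ` and `Ω'`, let `X = Fin r` (`r ≥ 1`) carry
the trivial `H`-action and set `Ω = Ω' ⊔ X` with the componentwise action. If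
`f : Δ → Ω` is `H`-equivariant and agrees with some bijection `θ : Δ → Ω` outside a
finite set, then `H` is finite and `|H|` divides `r`. -/
theorem finite_of_equivariant_almost_bijection (H : Type u) [Group H]
    (Δ Ω' : Type u) (r : ℕ) (hr : 1 ≤ r)
    (ρΔ : H →* Equiv.Perm Δ) (ρΩ : H →* Equiv.Perm Ω')
    (hfreeΔ : ∀ (h : H) (x : Δ), ρΔ h x = x → h = 1)
    (hfreeΩ : ∀ (h : H) (x : Ω'), ρΩ h x = x → h = 1)
    (f : Δ → Ω' ⊕ Fin r)
    (hequiv : ∀ (h : H) (x : Δ), f (ρΔ h x) = Sum.map (ρΩ h) id (f x))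
    (θ : Δ ≃ (Ω' ⊕ Fin r))
    (hfin : {x : Δ | f x ≠ θ x}.Finite) :
    Finite H ∧ Nat.card H ∣ r := by
  let _ : MulAction H Δ := .compHom Δ ρΔ
  let _ : MulAction H Ω' := .compHom Ω' ρΩ
  -- `h • z` unfolds to `Sum.map (ρΩ h) id z`, so `hequiv` is the equivariance of `f` as stated.
  let _ : MulAction H (Ω' ⊕ Fin r) :=
    .compHom _ ((Equiv.Perm.sumCongrHom Ω' (Fin r)).comp (ρΩ.prod 1))
  have : IsCancelSMul H Δ := isCancelSMul_iff_eq_one_of_smul_eq.mpr hfreeΔ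
  have : IsCancelSMul H Ω' := isCancelSMul_iff_eq_one_of_smul_eq.mpr hfreeΩ
  set Y : Set (Ω' ⊕ Fin r) := {z | ¬∃! x, f x = z} ∪ range Sum.inr
  have hY : Y.Finite := (((hfin.image f).union (hfin.image θ)).subset
    (setOf_not_existsUnique_subset f θ)).union (finite_range _)
  have hYinv : ∀ h : H, ∀ z ∈ Y, h • z ∈ Y := by
    rintro h z (hz | ⟨i, rfl⟩)
    · exact Or.inl ((not_congr (existsUnique_eq_smul_iff hequiv h z)).mpr hz)
    · exact Or.inr ⟨i, rfl⟩
  have hdvdY : Nat.card H ∣ Y.ncard :=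
    card_dvd_ncard_of_equivariant_of_finite_ne hequiv hfin hY subset_union_left hYinv
  have hdvdInl : Nat.card H ∣ (Sum.inl ⁻¹' Y).ncard :=
    card_dvd_ncard_of_isCancelSMul (hY.preimage Sum.inl_injective.injOn) fun h _ hω => hYinv h _ hω
  have hdvd : Nat.card H ∣ r := by
    rw [ncard_eq_ncard_preimage_inl_add_ncard_preimage_inr hY,
      preimage_eq_univ_iff.mpr subset_union_right, ncard_univ, Nat.card_fin] at hdvdY
    exact (Nat.dvd_add_right hdvdInl).mp hdvdY
  exact ⟨Nat.finite_of_card_ne_zero fun h0 => by simp [h0] at hdvd; omega, hdvd⟩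
end
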